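/- arXiv:1402.2234 — 4 statements merged into one kernel-verified Lean document; each statement's English description precedes it below -/
import Mathlib

section
/- Let μ be a probability measure with finite entropy on a countable group G. If there exist finite subsets A_n ⊂ G with (1/n) log |A_n| → 0 and μ^{*n}(A_n) → 1, then the asymptotic entropy h(μ) = lim_n H(μ^{*n})/n equals 0. -/
open Filter
open scoped Classical

/-- Convolution of two measures (given by densities) on a countable group:
`(μ * ν)(g) = ∑ₕ μ(g h⁻¹) ν(h)`. -/
noncomputable def conv {G : Type*} [Group G] (μ ν : G → ℝ) : G → ℝ :=
  fun g => ∑' h, μ (g * h⁻¹) * ν h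

/-- The `n`-fold convolution power `μ^{*n}` (with `μ^{*0}` the Dirac mass at the identity). -/
noncomputable def convPow {G : Type*} [Group G] (μ : G → ℝ) : ℕ → G → ℝ
  | 0 => fun g => if g = 1 then 1 else 0
  | n + 1 => conv (convPow μ n) μ

/-- Shannon entropy `H(μ) = -∑_g μ(g) log μ(g)`. -/
noncomputable def entropy {G : Type*} (μ : G → ℝ) : ℝ :=
  ∑' g, Real.negMulLog (μ g)

/-! Write `ν n = μ^{*n}`. The part of the entropy of `ν n` carried by `A n` is at most
`log |A n| + 1`. Off `A n`, subadditivity of `negMulLog` along `ν (n+1) = ν n * μ` bounds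
`negMulLog (ν n y)` by the entropy carried by the paths of the walk ending at `y`. Splitting
`negMulLog (μ x) ≤ C μ(x) + T(x)` with `∑ T < ε` (`C` controls finitely many heavy atoms, `T` is
the entropy tail of `μ`), the paths ending outside `A n` contribute at most
`n (C ν n (A n)ᶜ + ε)`, so `limsup H(ν n)/n ≤ ε`. -/

namespace Real

lemma negMulLog_le_mul_log_add_inv {p k : ℝ} (hp : 0 ≤ p) (hk : 0 < k) :
    negMulLog p ≤ p * log k + k⁻¹ := by
  have hkp : k * (negMulLog p - p * log k) = negMulLog (k * p) := by
    rw [negMulLog_mul]; simp only [negMulLog]; ring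
  have hle : k * (negMulLog p - p * log k) ≤ 1 := by
    rw [hkp]; linarith [negMulLog_le_one_sub_self (mul_nonneg hk.le hp), mul_nonneg hk.le hp]
  linarith [(le_div_iff₀' hk).2 hle, one_div k]

lemma sum_negMulLog_le_log_card_add_one {α : Type*} (s : Finset α) {p : α → ℝ}
    (hp0 : ∀ i ∈ s, 0 ≤ p i) (hp1 : ∑ i ∈ s, p i ≤ 1) :
    ∑ i ∈ s, negMulLog (p i) ≤ log s.card + 1 := by
  rcases s.eq_empty_or_nonempty with rfl | hs
  · simp
  have hk : (0 : ℝ) < s.card := by exact_mod_cast hs.card_pos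
  calc ∑ i ∈ s, negMulLog (p i) ≤ ∑ i ∈ s, (p i * log s.card + (s.card : ℝ)⁻¹) :=
        Finset.sum_le_sum fun i hi => negMulLog_le_mul_log_add_inv (hp0 i hi) hk
    _ = (∑ i ∈ s, p i) * log s.card + 1 := by
        rw [Finset.sum_add_distrib, ← Finset.sum_mul, Finset.sum_const, nsmul_eq_mul,
          mul_inv_cancel₀ hk.ne']
    _ ≤ log s.card + 1 := by
        gcongr
        exact mul_le_of_le_one_left (log_natCast_nonneg _) hp1

lemma negMulLog_tsum_le {α : Type*} {a b : α → ℝ} (ha0 : ∀ x, 0 ≤ a x) (ha : Summable a)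
    (hb : Summable b) (hab : ∀ x, negMulLog (a x) ≤ b x) :
    negMulLog (∑' x, a x) ≤ ∑' x, b x := by
  have hS : negMulLog (∑' x, a x) = ∑' x, a x * -log (∑' x, a x) := by
    rw [tsum_mul_right, negMulLog]; ring
  rw [hS]
  refine (ha.mul_right _).tsum_le_tsum (fun x => ?_) hb
  refine le_trans ?_ (hab x)
  rcases (ha0 x).eq_or_lt with hx | hx
  · simp [← hx]
  · rw [negMulLog, neg_mul, ← mul_neg]
    gcongr
    exact ha.le_tsum x fun j _ => ha0 j

lemma exists_negMulLog_le_mul_add {α : Type*} {μ : α → ℝ} (hμ0 : ∀ x, 0 ≤ μ x)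
    (hμ1 : ∀ x, μ x ≤ 1) (hH : Summable fun x => negMulLog (μ x)) {ε : ℝ} (hε : 0 < ε) :
    ∃ C : ℝ, ∃ T : α → ℝ, (∀ x, 0 ≤ T x) ∧ Summable T ∧ ∑' x, T x < ε ∧
      ∀ x, negMulLog (μ x) ≤ C * μ x + T x := by
  obtain ⟨F, hF⟩ : ∃ F : Finset α, ∑' x : {x // x ∉ F}, negMulLog (μ x) < ε :=
    ((tendsto_tsum_compl_atTop_zero fun x => negMulLog (μ x)).eventually
      (gt_mem_nhds hε)).exists
  set C := ∑ y ∈ F, |log (μ y)|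
  refine ⟨C, (↑F : Set α)ᶜ.indicator fun x => negMulLog (μ x),
    fun x => Set.indicator_nonneg (fun x _ => negMulLog_nonneg (hμ0 x) (hμ1 x)) x,
    hH.indicator _, by rwa [← tsum_subtype], fun x => ?_⟩
  by_cases hx : x ∈ F
  · rw [Set.indicator_of_notMem (by simpa using hx), add_zero, negMulLog, neg_mul, ← mul_neg,
      mul_comm C]
    gcongr
    · exact hμ0 x
    · exact (neg_le_abs _).trans
        (Finset.single_le_sum (f := fun y => |log (μ y)|) (fun y _ => abs_nonneg _) hx)
  · rw [Set.indicator_of_mem (by simpa using hx)]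
    have : 0 ≤ C := Finset.sum_nonneg fun y _ => abs_nonneg _
    nlinarith [hμ0 x]

end Real

section Convolution

variable {G : Type*} [Group G]

lemma summable_conv_summand {f g : G → ℝ} (hf0 : ∀ x, 0 ≤ f x) (hg0 : ∀ x, 0 ≤ g x)
    (hf : Summable f) (hg : Summable g) (y : G) : Summable fun x => f (y * x⁻¹) * g x :=
  Summable.of_nonneg_of_le (fun x => mul_nonneg (hf0 _) (hg0 x))
    (fun x => mul_le_mul_of_nonneg_right (hf.le_tsum _ fun j _ => hf0 j) (hg0 x))
    (hg.mul_left _)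

lemma hasSum_conv {f g : G → ℝ} {a b : ℝ} (hf0 : ∀ x, 0 ≤ f x) (hg0 : ∀ x, 0 ≤ g x)
    (hf : HasSum f a) (hg : HasSum g b) : HasSum (conv f g) (a * b) := by
  let shear : G × G ≃ G × G :=
    { toFun := fun p => (p.1 * p.2⁻¹, p.2)
      invFun := fun p => (p.1 * p.2, p.2)
      left_inv := fun p => by simp
      right_inv := fun p => by simp }
  have hprod : HasSum (fun p : G × G => f p.1 * g p.2) (a * b) :=
    hf.mul hg (hf.summable.mul_of_nonneg hg.summable hf0 hg0)
  exact (shear.hasSum_iff.2 hprod).prod_fiberwise fun y =>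
    (summable_conv_summand hf0 hg0 hf.summable hg.summable y).hasSum

variable {μ : G → ℝ}

lemma convPow_nonneg (hμ0 : ∀ x, 0 ≤ μ x) : ∀ n x, 0 ≤ convPow μ n x
  | 0, x => by simp only [convPow]; split_ifs <;> norm_num
  | n + 1, _ => tsum_nonneg fun x => mul_nonneg (convPow_nonneg hμ0 n _) (hμ0 x)

lemma hasSum_convPow (hμ0 : ∀ x, 0 ≤ μ x) (hμ : HasSum μ 1) : ∀ n, HasSum (convPow μ n) 1
  | 0 => by simpa [convPow] using hasSum_ite_eq (1 : G) (1 : ℝ)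
  | n + 1 => by
    rw [convPow, ← mul_one (1 : ℝ)]
    exact hasSum_conv (convPow_nonneg hμ0 n) hμ0 (hasSum_convPow hμ0 hμ n) hμ

lemma convPow_le_one (hμ0 : ∀ x, 0 ≤ μ x) (hμ : HasSum μ 1) (n : ℕ) (x : G) :
    convPow μ n x ≤ 1 :=
  le_hasSum (hasSum_convPow hμ0 hμ n) x fun y _ => convPow_nonneg hμ0 n y

/-- Unfolded, `convPowTail μ T n = ∑_{k<n} μ^{*k} * T * μ^{*(n-1-k)}`. -/
noncomputable def convPowTail (μ T : G → ℝ) : ℕ → G → ℝ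
  | 0 => 0
  | n + 1 => conv (convPowTail μ T n) μ + conv (convPow μ n) T

variable {T : G → ℝ}

lemma convPowTail_nonneg (hμ0 : ∀ x, 0 ≤ μ x) (hT0 : ∀ x, 0 ≤ T x) :
    ∀ n x, 0 ≤ convPowTail μ T n x
  | 0, _ => le_rfl
  | n + 1, _ => add_nonneg
      (tsum_nonneg fun x => mul_nonneg (convPowTail_nonneg hμ0 hT0 n _) (hμ0 x))
      (tsum_nonneg fun x => mul_nonneg (convPow_nonneg hμ0 n _) (hT0 x))

lemma hasSum_convPowTail (hμ0 : ∀ x, 0 ≤ μ x) (hμ : HasSum μ 1) (hT0 : ∀ x, 0 ≤ T x)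
    {τ : ℝ} (hT : HasSum T τ) : ∀ n : ℕ, HasSum (convPowTail μ T n) (n * τ)
  | 0 => by rw [convPowTail, Nat.cast_zero, zero_mul]; exact hasSum_zero
  | n + 1 => by
    rw [convPowTail, show ((n + 1 : ℕ) : ℝ) * τ = n * τ * 1 + 1 * τ by push_cast; ring]
    exact (hasSum_conv (convPowTail_nonneg hμ0 hT0 n) hμ0
      (hasSum_convPowTail hμ0 hμ hT0 hT n) hμ).add
      (hasSum_conv (convPow_nonneg hμ0 n) hT0 (hasSum_convPow hμ0 hμ n) hT)

end Convolution

section Entropy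

open Real

variable {G : Type*} [Group G] {μ T : G → ℝ} {C : ℝ}

lemma negMulLog_convPow_le (hμ0 : ∀ x, 0 ≤ μ x) (hμ : HasSum μ 1) (hT0 : ∀ x, 0 ≤ T x)
    (hT : Summable T) (hCT : ∀ x, negMulLog (μ x) ≤ C * μ x + T x) :
    ∀ (n : ℕ) (y : G), negMulLog (convPow μ n y) ≤ n * C * convPow μ n y + convPowTail μ T n y
  | 0, y => by by_cases hy : y = 1 <;> simp [convPow, convPowTail, hy]
  | n + 1, y => by
    set ν := convPow μ n
    set r := convPowTail μ T n
    have hν0 := convPow_nonneg hμ0 n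
    have hν := hasSum_convPow hμ0 hμ n
    have hr0 := convPowTail_nonneg hμ0 hT0 n
    have hr := hasSum_convPowTail hμ0 hμ hT0 hT.hasSum n
    have hstep : HasSum (fun x => ν (y * x⁻¹) * μ x) (convPow μ (n + 1) y) :=
      (summable_conv_summand hν0 hμ0 hν.summable hμ.summable y).hasSum
    have hbound := ((hstep.mul_left (n * C)).add
      (summable_conv_summand hr0 hμ0 hr.summable hμ.summable y).hasSum).add
      ((hstep.mul_left C).add (summable_conv_summand hν0 hT0 hν.summable hT y).hasSum)
    calc negMulLog (convPow μ (n + 1) y)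
        ≤ ∑' x, (n * C * (ν (y * x⁻¹) * μ x) + r (y * x⁻¹) * μ x +
            (C * (ν (y * x⁻¹) * μ x) + ν (y * x⁻¹) * T x)) :=
          negMulLog_tsum_le (fun x => mul_nonneg (hν0 _) (hμ0 x)) hstep.summable
            hbound.summable fun x => ?_
      _ = (n + 1 : ℕ) * C * convPow μ (n + 1) y + convPowTail μ T (n + 1) y := by
          rw [hbound.tsum_eq, convPowTail]
          simp only [Pi.add_apply, conv]
          push_cast
          ring
    have hpath := mul_le_mul_of_nonneg_left (negMulLog_convPow_le hμ0 hμ hT0 hT hCT n (y * x⁻¹))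
      (hμ0 x)
    have hlast := mul_le_mul_of_nonneg_left (hCT x) (hν0 (y * x⁻¹))
    rw [negMulLog_mul]
    linarith

lemma entropy_convPow_le (hμ0 : ∀ x, 0 ≤ μ x) (hμ : HasSum μ 1) (hT0 : ∀ x, 0 ≤ T x)
    (hT : Summable T) (hCT : ∀ x, negMulLog (μ x) ≤ C * μ x + T x) (n : ℕ) (B : Finset G) :
    entropy (convPow μ n) ≤
      log B.card + 1 + n * (C * (1 - ∑ y ∈ B, convPow μ n y) + ∑' x, T x) := by
  set ν := convPow μ n
  have hν0 := convPow_nonneg hμ0 n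
  have hν := hasSum_convPow hμ0 hμ n
  have hr := hasSum_convPowTail hμ0 hμ hT0 hT.hasSum n
  have hbound := negMulLog_convPow_le hμ0 hμ hT0 hT hCT n
  have hdom : Summable fun y => n * C * ν y + convPowTail μ T n y :=
    (hν.summable.mul_left _).add hr.summable
  have hH : Summable fun y => negMulLog (ν y) :=
    .of_nonneg_of_le (fun y => negMulLog_nonneg (hν0 y) (convPow_le_one hμ0 hμ n y)) hbound hdom
  have hνB : ∑ y ∈ B, ν y ≤ 1 := sum_le_hasSum B (fun y _ => hν0 y) hν
  have hνBc : ∑' y : ↑(↑B : Set G)ᶜ, ν y = 1 - ∑ y ∈ B, ν y := by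
    rw [← hν.tsum_eq, ← hν.summable.sum_add_tsum_compl (s := B), add_sub_cancel_left]
  have hcompl : ∑' y : ↑(↑B : Set G)ᶜ, negMulLog (ν y) ≤
      n * (C * (1 - ∑ y ∈ B, ν y) + ∑' x, T x) :=
    calc ∑' y : ↑(↑B : Set G)ᶜ, negMulLog (ν y)
        ≤ ∑' y : ↑(↑B : Set G)ᶜ, (n * C * ν y + convPowTail μ T n y) :=
          (hH.subtype _).tsum_le_tsum (fun y => hbound y) (hdom.subtype _)
      _ = n * C * (1 - ∑ y ∈ B, ν y) + ∑' y : ↑(↑B : Set G)ᶜ, convPowTail μ T n y := by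
          rw [Summable.tsum_add ?_ ?_, tsum_mul_left, hνBc]
          exacts [(hν.summable.subtype _).mul_left _, hr.summable.subtype _]
      _ ≤ n * C * (1 - ∑ y ∈ B, ν y) + n * ∑' x, T x := by
          rw [← hr.tsum_eq]
          gcongr
          exact hr.summable.tsum_subtype_le _ _ (convPowTail_nonneg hμ0 hT0 n)
      _ = n * (C * (1 - ∑ y ∈ B, ν y) + ∑' x, T x) := by ring
  rw [entropy, ← hH.sum_add_tsum_compl (s := B)]
  linarith [sum_negMulLog_le_log_card_add_one B (fun y _ => hν0 y) hνB]

end Entropy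

theorem asymptotic_entropy_zero_of_subexponential_sets_general {G : Type*} [Group G]
    (μ : G → ℝ) (hnn : ∀ g, 0 ≤ μ g) (h1 : HasSum μ 1)
    (hH : Summable fun g => Real.negMulLog (μ g))
    (A : ℕ → Finset G)
    (hcard : Tendsto (fun n : ℕ => Real.log (A n).card / n) atTop (nhds 0))
    (hA : Tendsto (fun n : ℕ => ∑ g ∈ A n, convPow μ n g) atTop (nhds 1)) :
    Tendsto (fun n : ℕ => entropy (convPow μ n) / n) atTop (nhds 0) := by
  have hentropy_nonneg (n : ℕ) : 0 ≤ entropy (convPow μ n) :=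
    tsum_nonneg fun g => Real.negMulLog_nonneg (convPow_nonneg hnn n g) (convPow_le_one hnn h1 n g)
  refine tendsto_order.2 ⟨fun b hb => .of_forall fun n => hb.trans_le
    (div_nonneg (hentropy_nonneg n) n.cast_nonneg), fun a ha => ?_⟩
  obtain ⟨C, T, hT0, hT, hτ, hCT⟩ := Real.exists_negMulLog_le_mul_add hnn
    (fun x => le_hasSum h1 x fun y _ => hnn y) hH ha
  have hlim : Tendsto (fun n : ℕ => 1 / n + Real.log (A n).card / n +
      (C * (1 - ∑ g ∈ A n, convPow μ n g) + ∑' x, T x))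
      atTop (nhds (0 + 0 + (C * (1 - 1) + ∑' x, T x))) :=
    (tendsto_one_div_atTop_nhds_zero_nat.add hcard).add
      (((hA.const_sub 1).const_mul C).add_const _)
  rw [sub_self, mul_zero, zero_add, zero_add, zero_add] at hlim
  filter_upwards [hlim.eventually (gt_mem_nhds hτ), eventually_gt_atTop 0] with n hn hn0
  calc entropy (convPow μ n) / n
      ≤ (Real.log (A n).card + 1 + n * (C * (1 - ∑ g ∈ A n, convPow μ n g) + ∑' x, T x)) / n := by
        gcongr
        exact entropy_convPow_le hnn h1 hT0 hT hCT n (A n)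
    _ = 1 / n + Real.log (A n).card / n + (C * (1 - ∑ g ∈ A n, convPow μ n g) + ∑' x, T x) := by
        field_simp
        ring
    _ < a := hn

/-- If μ has finite entropy on a countable group G and there are finite
subsets A_n ⊂ G with (1/n) log|A_n| → 0 and μ^{*n}(A_n) → 1, then the asymptotic
entropy h(μ) = lim H(μ^{*n})/n equals 0. -/
theorem asymptotic_entropy_zero_of_subexponential_sets {G : Type*} [Group G] [Countable G]
    (μ : G → ℝ) (hnn : ∀ g, 0 ≤ μ g) (h1 : HasSum μ 1)
    (hH : Summable fun g => Real.negMulLog (μ g))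
    (A : ℕ → Finset G)
    (hcard : Tendsto (fun n : ℕ => Real.log (A n).card / n) atTop (nhds 0))
    (hA : Tendsto (fun n : ℕ => ∑ g ∈ A n, convPow μ n g) atTop (nhds 1)) :
    Tendsto (fun n : ℕ => entropy (convPow μ n) / n) atTop (nhds 0) :=
  asymptotic_entropy_zero_of_subexponential_sets_general μ hnn h1 hH A hcard hA
end

section
/- Let μ be a probability measure with finite entropy on a countable group G with h(μ) = 0. Then for every ε > 0 the sets B_n^ε = {g ∈ G : μ^{*n}(g) ≥ e^{-εn}} satisfy |B_n^ε| ≤ e^{εn} and μ^{*n}(B_n^ε) → 1 as n → ∞. -/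
open Filter
open scoped Classical

lemma negMulLog_add_le {a b : ℝ} (ha : 0 ≤ a) (hb : 0 ≤ b) :
    Real.negMulLog (a + b) ≤ Real.negMulLog a + Real.negMulLog b := by
  rcases ha.eq_or_lt with h | h
  · simp [← h]
  rcases hb.eq_or_lt with h' | h'
  · simp [← h']
  have h1 : Real.log a ≤ Real.log (a + b) := Real.log_le_log h (by linarith)
  have h2 : Real.log b ≤ Real.log (a + b) := Real.log_le_log h' (by linarith)
  simp only [Real.negMulLog]
  nlinarith [mul_le_mul_of_nonneg_left h1 ha, mul_le_mul_of_nonneg_left h2 hb]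

lemma negMulLog_sum_le {ι : Type*} (s : Finset ι) (a : ι → ℝ) (ha : ∀ i, 0 ≤ a i) :
    Real.negMulLog (∑ i ∈ s, a i) ≤ ∑ i ∈ s, Real.negMulLog (a i) := by
  induction s using Finset.cons_induction with
  | empty => simp
  | cons i s hi ih =>
      rw [Finset.sum_cons, Finset.sum_cons]
      exact le_trans (negMulLog_add_le (ha i) (Finset.sum_nonneg fun j _ => ha j))
        (by linarith)

lemma negMulLog_tsum_le {ι : Type*} {a : ι → ℝ} (ha : ∀ i, 0 ≤ a i) (ha1 : ∀ i, a i ≤ 1)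
    (hs : Summable a) (hn : Summable fun i => Real.negMulLog (a i)) :
    Real.negMulLog (∑' i, a i) ≤ ∑' i, Real.negMulLog (a i) := by
  have key : Tendsto (fun s : Finset ι => Real.negMulLog (∑ i ∈ s, a i)) atTop
      (nhds (Real.negMulLog (∑' i, a i))) :=
    (Real.continuous_negMulLog.continuousAt).tendsto.comp hs.hasSum
  refine le_of_tendsto key (Eventually.of_forall fun s => ?_)
  exact le_trans (negMulLog_sum_le s a ha)
    (Summable.sum_le_tsum s (fun i _ => Real.negMulLog_nonneg (ha i) (ha1 i)) hn)

/-- The shear equivalence `(a, h) ↦ (a h, h)` of `G × G`. -/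
def shear {G : Type*} [Group G] : G × G ≃ G × G where
  toFun p := (p.1 * p.2, p.2)
  invFun p := (p.1 * p.2⁻¹, p.2)
  left_inv p := by simp
  right_inv p := by simp

lemma conv_prop {G : Type*} [Group G] {μ ν : G → ℝ} (hμ0 : ∀ g, 0 ≤ μ g) (hν0 : ∀ g, 0 ≤ ν g)
    (hμ1 : HasSum μ 1) (hν1 : HasSum ν 1)
    (hμH : Summable fun g => Real.negMulLog (μ g))
    (hνH : Summable fun g => Real.negMulLog (ν g)) :
    (∀ g, 0 ≤ conv μ ν g) ∧ HasSum (conv μ ν) 1 ∧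
      Summable fun g => Real.negMulLog (conv μ ν g) := by
  have hμle1 : ∀ g, μ g ≤ 1 := fun g => le_hasSum hμ1 g (fun i _ => hμ0 i)
  have hνle1 : ∀ g, ν g ≤ 1 := fun g => le_hasSum hν1 g (fun i _ => hν0 i)
  have hμHnn : ∀ g, 0 ≤ Real.negMulLog (μ g) := fun g => Real.negMulLog_nonneg (hμ0 g) (hμle1 g)
  have hνHnn : ∀ g, 0 ≤ Real.negMulLog (ν g) := fun g => Real.negMulLog_nonneg (hν0 g) (hνle1 g)
  set F : G × G → ℝ := fun p => μ (p.1 * p.2⁻¹) * ν p.2 with hF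
  have h2 : Summable (fun p : G × G => μ p.1 * ν p.2) :=
    hμ1.summable.mul_of_nonneg hν1.summable hμ0 hν0
  have h3 : HasSum (fun p : G × G => μ p.1 * ν p.2) 1 := by
    have := hμ1.mul_eq hν1 h2.hasSum
    rw [one_mul] at this
    exact this ▸ h2.hasSum
  have hFsum : HasSum F 1 := by
    have : F = (fun p : G × G => μ p.1 * ν p.2) ∘ (shear (G := G)).symm := rfl
    rw [this, Equiv.hasSum_iff]
    exact h3
  have hfib : ∀ g, Summable (fun h => F (g, h)) := fun g => hFsum.summable.prod_factor g
  have hfibHasSum : ∀ g, HasSum (fun h => F (g, h)) (conv μ ν g) := fun g => (hfib g).hasSum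
  have hconv1 : HasSum (conv μ ν) 1 := hFsum.prod_fiberwise hfibHasSum
  have hconv0 : ∀ g, 0 ≤ conv μ ν g := fun g =>
    tsum_nonneg fun h => mul_nonneg (hμ0 _) (hν0 _)
  refine ⟨hconv0, hconv1, ?_⟩
  have hΨeq : (fun p : G × G => Real.negMulLog (F p)) =
      fun p => ν p.2 * Real.negMulLog (μ (p.1 * p.2⁻¹)) +
        μ (p.1 * p.2⁻¹) * Real.negMulLog (ν p.2) := by
    funext p
    exact Real.negMulLog_mul _ _
  have hΨ1 : Summable (fun p : G × G => Real.negMulLog (μ p.1) * ν p.2) :=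
    hμH.mul_of_nonneg hν1.summable hμHnn hν0
  have hΨ2 : Summable (fun p : G × G => μ p.1 * Real.negMulLog (ν p.2)) :=
    hμ1.summable.mul_of_nonneg hνH hμ0 hνHnn
  have hΨ1' : Summable (fun p : G × G => Real.negMulLog (μ (p.1 * p.2⁻¹)) * ν p.2) := by
    have : (fun p : G × G => Real.negMulLog (μ (p.1 * p.2⁻¹)) * ν p.2) =
        (fun p : G × G => Real.negMulLog (μ p.1) * ν p.2) ∘ (shear (G := G)).symm := rfl
    rw [this, Equiv.summable_iff]
    exact hΨ1
  have hΨ2' : Summable (fun p : G × G => μ (p.1 * p.2⁻¹) * Real.negMulLog (ν p.2)) := by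
    have : (fun p : G × G => μ (p.1 * p.2⁻¹) * Real.negMulLog (ν p.2)) =
        (fun p : G × G => μ p.1 * Real.negMulLog (ν p.2)) ∘ (shear (G := G)).symm := rfl
    rw [this, Equiv.summable_iff]
    exact hΨ2
  have hΨ : Summable (fun p : G × G => Real.negMulLog (F p)) := by
    rw [hΨeq]
    exact Summable.add (by simpa [mul_comm] using hΨ1') hΨ2'
  have hΨfib : ∀ g, Summable (fun h => Real.negMulLog (F (g, h))) :=
    fun g => hΨ.prod_factor g
  set m : G → ℝ := fun g => ∑' h, Real.negMulLog (F (g, h)) with hm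
  have hmsum : Summable m :=
    (hΨ.hasSum.prod_fiberwise fun g => (hΨfib g).hasSum).summable
  apply Summable.of_nonneg_of_le
    (fun g => Real.negMulLog_nonneg (hconv0 g) (le_hasSum hconv1 g fun i _ => hconv0 i))
    (fun g => ?_) hmsum
  exact negMulLog_tsum_le (fun h => mul_nonneg (hμ0 _) (hν0 _))
    (fun h => mul_le_one₀ (hμle1 _) (hν0 _) (hνle1 _)) (hfib g) (hΨfib g)

lemma convPow_prop {G : Type*} [Group G] (μ : G → ℝ) (hnn : ∀ g, 0 ≤ μ g) (h1 : HasSum μ 1)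
    (hH : Summable fun g => Real.negMulLog (μ g)) (n : ℕ) :
    (∀ g, 0 ≤ convPow μ n g) ∧ HasSum (convPow μ n) 1 ∧
      Summable fun g => Real.negMulLog (convPow μ n g) := by
  induction n with
  | zero =>
      refine ⟨fun g => by by_cases h : g = 1 <;> simp [convPow, h], ?_, ?_⟩
      · simpa [convPow] using hasSum_ite_eq (1 : G) (1 : ℝ)
      · apply summable_of_ne_finset_zero (s := {(1 : G)})
        intro g hg
        simp only [Finset.mem_singleton] at hg
        simp [convPow, hg]
  | succ n ih =>
      obtain ⟨h0, hsum, hent⟩ := ih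
      simpa [convPow] using conv_prop h0 hnn hsum h1 hent hH

/-- If μ has finite entropy on a countable group G and h(μ) = 0, then for
every ε > 0 the sets B_n^ε = {g : μ^{*n}(g) ≥ e^{-εn}} satisfy |B_n^ε| ≤ e^{εn}, and
μ^{*n}(B_n^ε) → 1 as n → ∞. -/
theorem sets_Bn_of_zero_entropy {G : Type*} [Group G] [Countable G]
    (μ : G → ℝ) (hnn : ∀ g, 0 ≤ μ g) (h1 : HasSum μ 1)
    (hH : Summable fun g => Real.negMulLog (μ g))
    (hzero : Tendsto (fun n : ℕ => entropy (convPow μ n) / n) atTop (nhds 0)) :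
    ∀ ε : ℝ, 0 < ε →
      (∀ n : ℕ, 1 ≤ n →
        {g : G | Real.exp (-(ε * n)) ≤ convPow μ n g}.Finite ∧
        (Nat.card {g : G | Real.exp (-(ε * n)) ≤ convPow μ n g} : ℝ) ≤ Real.exp (ε * n)) ∧
      Tendsto
        (fun n : ℕ => ∑' g : {g : G | Real.exp (-(ε * n)) ≤ convPow μ n g}, convPow μ n g)
        atTop (nhds 1) := by
  intro ε hε
  have hP := convPow_prop μ hnn h1 hH
  set B : ℕ → Set G := fun n => {g : G | Real.exp (-(ε * n)) ≤ convPow μ n g} with hB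
  have hfin : ∀ n : ℕ, (B n).Finite := by
    intro n
    have h := ((hP n).2.1.summable.tendsto_cofinite_zero).eventually
      (Iio_mem_nhds (Real.exp_pos (-(ε * n))))
    rw [Filter.eventually_cofinite] at h
    refine h.subset ?_
    intro g hg
    simp only [Set.mem_setOf_eq, not_lt] at hg ⊢
    exact hg
  constructor
  · intro n hn
    refine ⟨hfin n, ?_⟩
    have hcard : ((hfin n).toFinset.card : ℝ) * Real.exp (-(ε * n)) ≤ 1 := by
      have h1' : ∑ g ∈ (hfin n).toFinset, convPow μ n g ≤ 1 :=
        sum_le_hasSum _ (fun g _ => (hP n).1 g) (hP n).2.1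
      have h2' : (hfin n).toFinset.card • Real.exp (-(ε * n)) ≤
          ∑ g ∈ (hfin n).toFinset, convPow μ n g := by
        apply Finset.card_nsmul_le_sum
        intro g hg
        simpa [hB] using ((hfin n).mem_toFinset).mp hg
      rw [nsmul_eq_mul] at h2'
      linarith
    have hNat : (Nat.card (B n) : ℝ) = ((hfin n).toFinset.card : ℝ) := by
      rw [Nat.card_coe_set_eq, Set.ncard_eq_toFinset_card (B n) (hfin n)]
    rw [show {g : G | Real.exp (-(ε * n)) ≤ convPow μ n g} = B n from rfl, hNat]
    have hepos := Real.exp_pos (ε * n)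
    rw [Real.exp_neg] at hcard
    calc ((hfin n).toFinset.card : ℝ)
        = ((hfin n).toFinset.card : ℝ) * (Real.exp (ε * n))⁻¹ * Real.exp (ε * n) := by
          field_simp
      _ ≤ 1 * Real.exp (ε * n) := mul_le_mul_of_nonneg_right hcard hepos.le
      _ = Real.exp (ε * n) := one_mul _
  · set T : ℕ → ℝ := fun n => ∑' g : ↥(B n)ᶜ, convPow μ n g with hT
    have hsub : ∀ n, Summable ((convPow μ n) ∘ ((↑) : B n → G)) :=
      fun n => (hP n).2.1.summable.subtype _
    have hsubc : ∀ n, Summable ((convPow μ n) ∘ ((↑) : ↥(B n)ᶜ → G)) :=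
      fun n => (hP n).2.1.summable.subtype _
    have hST : ∀ n, (∑' g : B n, convPow μ n g) + T n = 1 := by
      intro n
      have h := Summable.tsum_add_tsum_compl (hsub n) (hsubc n)
      rw [(hP n).2.1.tsum_eq] at h
      exact h
    have hT0 : ∀ n, 0 ≤ T n := fun n => tsum_nonneg fun g => (hP n).1 _
    have hTle : ∀ n : ℕ, 1 ≤ n → T n ≤ ε⁻¹ * (entropy (convPow μ n) / n) := by
      intro n hn
      have hnpos : (0 : ℝ) < n := by exact_mod_cast hn
      have hεn : (0 : ℝ) < ε * n := mul_pos hε hnpos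
      have hle1 : ∀ g, convPow μ n g ≤ 1 :=
        fun g => le_hasSum (hP n).2.1 g fun i _ => (hP n).1 i
      have hpt : ∀ g : ↥(B n)ᶜ, ε * n * convPow μ n g ≤ Real.negMulLog (convPow μ n g) := by
        intro gh
        obtain ⟨g, hg⟩ := gh
        simp only [Set.mem_compl_iff, hB, Set.mem_setOf_eq, not_le] at hg
        rcases ((hP n).1 g).eq_or_lt with h | h
        · simp [← h]
        · have hlog : Real.log (convPow μ n g) < -(ε * n) := by
            have := Real.log_lt_log h hg
            rwa [Real.log_exp] at this
          simp only [Real.negMulLog]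
          nlinarith
      have hsum1 : Summable (fun g : ↥(B n)ᶜ => ε * n * convPow μ n g) :=
        (hsubc n).mul_left _
      have hsum2 : Summable (fun g : ↥(B n)ᶜ => Real.negMulLog (convPow μ n g)) :=
        (hP n).2.2.subtype _
      have hbound : ε * n * T n ≤ entropy (convPow μ n) := by
        have h1' : (∑' g : ↥(B n)ᶜ, ε * n * convPow μ n g) ≤
            ∑' g : ↥(B n)ᶜ, Real.negMulLog (convPow μ n g) :=
          Summable.tsum_le_tsum hpt hsum1 hsum2
        rw [tsum_mul_left] at h1'
        refine le_trans h1' ?_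
        exact Summable.tsum_subtype_le (fun g => Real.negMulLog (convPow μ n g)) _
          (fun g => Real.negMulLog_nonneg ((hP n).1 g) (hle1 g)) (hP n).2.2
      have h2' : T n ≤ entropy (convPow μ n) / (ε * n) := by
        rw [le_div_iff₀ hεn]
        nlinarith [hbound]
      refine le_trans h2' (le_of_eq ?_)
      field_simp
    have hTtend : Tendsto T atTop (nhds 0) := by
      apply squeeze_zero' (Eventually.of_forall hT0)
        ((eventually_ge_atTop 1).mono hTle)
      have := hzero.const_mul ε⁻¹
      simpa using this
    have hSeq : (fun n : ℕ => ∑' g : B n, convPow μ n g) = fun n => 1 - T n :=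
      funext fun n => by linarith [hST n]
    rw [show (fun n : ℕ => ∑' g : {g : G | Real.exp (-(ε * n)) ≤ convPow μ n g},
        convPow μ n g) = fun n : ℕ => ∑' g : B n, convPow μ n g from rfl, hSeq]
    simpa using tendsto_const_nhds.sub hTtend
end

section
/- Let (Σ, τ) be a subshift without isolated periodic points, S a finite symmetric subset of [[τ]]. There exists l_0 ∈ ℕ such that for all n > 0, l > l_0, all h_1,…,h_n ∈ S with partial products g_j = h_j⋯h_1, every non-empty cylinder C_w of depth l, and every non-periodic x ∈ C_w satisfying max_{j≤n}|k_{g_j}(x)| ≤ l - l_0, the restriction of each orbit cocycle k_{g_j} to C_w is constant. -/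
open Filter

/-- The shift on bi-infinite sequences, as a bijection. -/
def shiftE {A : Type*} : (ℤ → A) ≃ (ℤ → A) where
  toFun x i := x (i + 1)
  invFun x i := x (i - 1)
  left_inv x := by funext i; simp
  right_inv x := by funext i; simp

/-- The cylinder of depth `l` determined by the word `w` (the letters `w i` for `|i| ≤ l`),
inside the subshift `Sub`. -/
def cylinder {A : Type*} (Sub : Set (ℤ → A)) (w : ℤ → A) (l : ℕ) : Set (ℤ → A) :=
  {x ∈ Sub | ∀ i : ℤ, |i| ≤ (l : ℤ) → x i = w i}

/-! Compactness gives one depth `l₀` such that every `k_s`, `s ∈ S`, is constant on cylinders of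
depth `l₀`. At a non-periodic point `z` the cocycle identity `k_{hg}(z) = k_h(g z) + k_g(z)` holds
exactly, and if `z, x ∈ C_w` with `k_g(z) = k_g(x) = c`, `|c| ≤ l - l₀`, then `g z = τ^c z` and
`g x = τ^c x` lie in one cylinder of depth `l₀`; so induction on `j` gives `k_{g_j}(z) = k_{g_j}(x)`
for non-periodic `z ∈ C_w`. Each set of points of a fixed period is finite and, having no isolated
points, nowhere dense, so by Baire the non-periodic points are dense and continuity of `k_{g_j}`
extends the equality to all of the open set `C_w`. -/

open Topology

theorem Equiv.Perm.zpow_apply_injective_of_aperiodic {α : Type*} {σ : Equiv.Perm α} {x : α}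
    (hx : ∀ m : ℤ, m ≠ 0 → (σ ^ m) x ≠ x) : Function.Injective fun m : ℤ => (σ ^ m) x := by
  intro a b (hab : (σ ^ a) x = (σ ^ b) x)
  by_contra hne
  apply hx (a - b) (sub_ne_zero.2 hne)
  rw [sub_eq_neg_add, zpow_add, mul_apply, hab, ← mul_apply, ← zpow_add, neg_add_cancel,
    zpow_zero, one_apply]

theorem List.prod_reverse_take_succ {M : Type*} [Monoid M] (L : List M) {j : ℕ}
    (hj : j < L.length) : (L.take (j + 1)).reverse.prod = L[j] * (L.take j).reverse.prod := by
  rw [List.take_add_one, List.getElem?_eq_getElem hj, Option.toList_some, List.reverse_append]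
  simp

theorem List.prod_reverse_take_mem_closure {G : Type*} [Group G] {S : Set G} {L : List G}
    (hL : ∀ s ∈ L, s ∈ S) (j : ℕ) : (L.take j).reverse.prod ∈ Subgroup.closure S :=
  Subgroup.list_prod_mem _ fun s hs =>
    Subgroup.subset_closure (hL s (List.mem_of_mem_take (List.mem_reverse.1 hs)))

theorem Set.Finite.interior_eq_empty_of_forall_mem_closure {X : Type*} [TopologicalSpace X]
    [T1Space X] {F : Set X} (hF : F.Finite) (hF' : ∀ x ∈ F, x ∈ closure {x}ᶜ) :
    interior F = ∅ := by
  refine Set.eq_empty_of_forall_notMem fun y hy => ?_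
  have hy_open : IsOpen ({y} : Set X) := by
    convert isOpen_interior.sdiff (hF.sdiff (t := {y})).isClosed using 1
    ext z
    constructor
    · rintro rfl
      exact ⟨hy, fun h => h.2 rfl⟩
    · exact fun ⟨hz, hzF⟩ => by_contra fun hzy => hzF ⟨interior_subset hz, hzy⟩
  simpa [hy_open.isClosed_compl.closure_eq] using hF' y (interior_subset hy)

theorem dense_iInter_compl_of_finite {X ι : Type*} [TopologicalSpace X] [T1Space X]
    [BaireSpace X] [Countable ι] {F : ι → Set X} (hF : ∀ i, (F i).Finite)
    (hF' : ∀ i, ∀ x ∈ F i, x ∈ closure {x}ᶜ) : Dense (⋂ i, (F i)ᶜ) :=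
  dense_iInter_of_isOpen (fun i => (hF i).isClosed.isOpen_compl) fun i =>
    interior_eq_empty_iff_dense_compl.1 ((hF i).interior_eq_empty_of_forall_mem_closure (hF' i))

section Shift

variable {A : Type*}

theorem shiftE_zpow_apply (m : ℤ) (x : ℤ → A) (i : ℤ) : (shiftE ^ m) x i = x (i + m) := by
  induction m using Int.induction_on generalizing x i with
  | zero => simp
  | succ m ih =>
    rw [zpow_add_one, Equiv.Perm.mul_apply, ih]
    simp only [shiftE, Equiv.coe_fn_mk]
    ring_nf
  | pred m ih =>
    rw [zpow_sub_one, Equiv.Perm.mul_apply, ih, Equiv.Perm.inv_def]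
    simp only [shiftE, Equiv.coe_fn_symm_mk]
    ring_nf

def IsAperiodic (x : ℤ → A) : Prop := ∀ m : ℤ, m ≠ 0 → (shiftE ^ m) x ≠ x

theorem finite_setOf_shiftE_zpow_eq [Finite A] {m : ℤ} (hm : m ≠ 0) :
    {x : ℤ → A | (shiftE ^ m) x = x}.Finite := by
  refine Set.Finite.of_injOn (f := fun x (j : Set.Ico 0 |m|) => x j) (Set.mapsTo_univ _ _)
    (fun x hx y hy hxy => funext fun i => ?_) Set.finite_univ
  have hper : ∀ z : ℤ → A, (shiftE ^ m) z = z → ∀ i, z i = z (i % m) := fun z hz i => by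
    have hz' : Function.Periodic z m := fun j => (shiftE_zpow_apply m z j).symm.trans (by rw [hz])
    simpa [Int.emod_def, mul_comm] using (hz'.sub_int_mul_eq (i / m)).symm
  have hmem : i % m ∈ Set.Ico 0 |m| := ⟨Int.emod_nonneg i hm, Int.emod_lt_abs i hm⟩
  rw [hper x hx, hper y hy]
  exact congrFun hxy ⟨_, hmem⟩

theorem cylinder_antitone (S : Set (ℤ → A)) (w : ℤ → A) : Antitone (cylinder S w) :=
  fun _ _ hl _ hx => ⟨hx.1, fun i hi => hx.2 i (hi.trans (by exact_mod_cast hl))⟩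

theorem cylinder_eq_of_mem {S S' : Set (ℤ → A)} {w y : ℤ → A} {l : ℕ}
    (hy : y ∈ cylinder S' w l) : cylinder S y l = cylinder S w l :=
  Set.ext fun _ => and_congr_right fun _ =>
    forall₂_congr fun i hi => ⟨fun h => h.trans (hy.2 i hi), fun h => h.trans (hy.2 i hi).symm⟩

theorem shiftE_zpow_mem_cylinder {S S' : Set (ℤ → A)} {w x : ℤ → A} {l l₀ : ℕ} {c : ℤ}
    (hx : x ∈ cylinder S w l) (hcx : (shiftE ^ c) x ∈ S') (hc : |c| + l₀ ≤ l) :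
    (shiftE ^ c) x ∈ cylinder S' ((shiftE ^ c) w) l₀ := by
  refine ⟨hcx, fun i hi => ?_⟩
  rw [shiftE_zpow_apply, shiftE_zpow_apply]
  exact hx.2 _ ((abs_add_le i c).trans (by linarith))

theorem cylinder_univ_eq_pi (w : ℤ → A) (l : ℕ) :
    cylinder Set.univ w l = (Set.Icc (-(l : ℤ)) l).pi fun i => {w i} := by
  ext x
  simp [cylinder, abs_le]

theorem exists_cylinder_subset_of_mem_nhds [TopologicalSpace A] {x : ℤ → A} {U : Set (ℤ → A)}
    (hU : U ∈ 𝓝 x) :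
    ∃ l : ℕ, cylinder Set.univ x l ⊆ U := by
  rw [nhds_pi, Filter.mem_pi'] at hU
  obtain ⟨I, t, ht, hIU⟩ := hU
  refine ⟨I.sup Int.natAbs, fun y hy => hIU fun i hi => ?_⟩
  rw [hy.2 i (by rw [Int.abs_eq_natAbs]; exact_mod_cast I.le_sup hi)]
  exact mem_of_mem_nhds (ht i)

def IsConstOnCylinders {Sub : Set (ℤ → A)} {B : Type*} (l : ℕ) (f : Sub → B) : Prop :=
  ∀ w : ℤ → A, ∀ y z : Sub,
    (y : ℤ → A) ∈ cylinder Sub w l → (z : ℤ → A) ∈ cylinder Sub w l → f y = f z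

section Cocycle

variable {Sub : Set (ℤ → A)}

def IsOrbitCocycle (g : Equiv.Perm Sub) (c : Sub → ℤ) : Prop :=
  ∀ x : Sub, ((g x : Sub) : ℤ → A) = (shiftE ^ c x) (x : ℤ → A)

namespace IsOrbitCocycle

theorem apply_eq_zero_of_one {c : Sub → ℤ} (hc : IsOrbitCocycle 1 c) {x : Sub}
    (hx : IsAperiodic (x : ℤ → A)) : c x = 0 :=
  by_contra fun h => hx _ h (hc x).symm

theorem mul_apply_eq {g h : Equiv.Perm Sub} {a b c : Sub → ℤ} (ha : IsOrbitCocycle g a)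
    (hb : IsOrbitCocycle h b) (hc : IsOrbitCocycle (h * g) c) {x : Sub}
    (hx : IsAperiodic (x : ℤ → A)) : c x = b (g x) + a x :=
  Equiv.Perm.zpow_apply_injective_of_aperiodic hx <| by
    show (shiftE ^ c x) (x : ℤ → A) = (shiftE ^ (b (g x) + a x)) (x : ℤ → A)
    rw [zpow_add, Equiv.Perm.mul_apply, ← ha x, ← hb (g x), ← hc x, Equiv.Perm.mul_apply]

theorem mul_apply_eq_of_mem_cylinder {g s : Equiv.Perm Sub} {a b c : Sub → ℤ}
    (ha : IsOrbitCocycle g a) (hb : IsOrbitCocycle s b) (hc : IsOrbitCocycle (s * g) c)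
    {l₀ l : ℕ} (hb_const : IsConstOnCylinders l₀ b)
    {w : ℤ → A} {x z : Sub} (hx : (x : ℤ → A) ∈ cylinder Sub w l)
    (hz : (z : ℤ → A) ∈ cylinder Sub w l) (hxa : IsAperiodic (x : ℤ → A))
    (hza : IsAperiodic (z : ℤ → A)) (hazx : a z = a x) (hax : |a x| ≤ (l : ℤ) - l₀) :
    c z = c x := by
  have hmem {y : Sub} (hy : (y : ℤ → A) ∈ cylinder Sub w l) (hay : a y = a x) :
      ((g y : Sub) : ℤ → A) ∈ cylinder Sub ((shiftE ^ a x) w) l₀ := by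
    rw [ha y, hay]
    exact shiftE_zpow_mem_cylinder hy (by rw [← hay, ← ha y]; exact (g y).2) (by linarith)
  rw [ha.mul_apply_eq hb hc hza, ha.mul_apply_eq hb hc hxa, hazx,
    hb_const _ _ _ (hmem hz hazx) (hmem hx rfl)]

end IsOrbitCocycle

theorem IsOrbitCocycle.prod_reverse_take_eq_of_mem_cylinder {S : Set (Equiv.Perm Sub)}
    {k : Equiv.Perm Sub → Sub → ℤ} (hk : ∀ g ∈ Subgroup.closure S, IsOrbitCocycle g (k g))
    {l₀ l : ℕ} (hS : ∀ s ∈ S, IsConstOnCylinders l₀ (k s))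
    {hs : List (Equiv.Perm Sub)} (hsS : ∀ s ∈ hs, s ∈ S)
    {w : ℤ → A} {x z : Sub} (hx : (x : ℤ → A) ∈ cylinder Sub w l)
    (hz : (z : ℤ → A) ∈ cylinder Sub w l) (hxa : IsAperiodic (x : ℤ → A))
    (hza : IsAperiodic (z : ℤ → A))
    (hmax : ∀ j ≤ hs.length, |k (hs.take j).reverse.prod x| ≤ (l : ℤ) - l₀) :
    ∀ j ≤ hs.length, k (hs.take j).reverse.prod z = k (hs.take j).reverse.prod x := by
  intro j hj
  induction j with
  | zero =>
    simp only [List.take_zero, List.reverse_nil, List.prod_nil]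
    rw [(hk 1 (one_mem _)).apply_eq_zero_of_one hza, (hk 1 (one_mem _)).apply_eq_zero_of_one hxa]
  | succ j ih =>
    have hj' : j < hs.length := hj
    have hsj : hs[j] ∈ S := hsS _ (List.getElem_mem hj')
    have hgj := List.prod_reverse_take_mem_closure hsS j
    rw [List.prod_reverse_take_succ hs hj']
    exact (hk _ hgj).mul_apply_eq_of_mem_cylinder (hk _ (Subgroup.subset_closure hsj))
      (hk _ (mul_mem (Subgroup.subset_closure hsj) hgj)) (hS _ hsj) hx hz hxa hza
      (ih hj'.le) (hmax j hj'.le)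

end Cocycle

variable [TopologicalSpace A] [DiscreteTopology A]

theorem isOpen_cylinder_univ (w : ℤ → A) (l : ℕ) : IsOpen (cylinder Set.univ w l) := by
  rw [cylinder_univ_eq_pi]
  exact isOpen_set_pi (Set.finite_Icc _ _) fun i _ => isOpen_discrete _

theorem isOpen_setOf_mem_cylinder (Sub : Set (ℤ → A)) (w : ℤ → A) (l : ℕ) :
    IsOpen {y : Sub | (y : ℤ → A) ∈ cylinder Sub w l} := by
  convert (isOpen_cylinder_univ w l).preimage continuous_subtype_val using 1
  exact Set.ext fun y => and_congr_left fun _ => iff_of_true y.2 trivial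

theorem exists_depth_constant_on_cylinders {Sub : Set (ℤ → A)} [CompactSpace Sub] {B : Type*}
    [TopologicalSpace B] [DiscreteTopology B] {f : Sub → B} (hf : Continuous f) :
    ∃ l₀ : ℕ, IsConstOnCylinders l₀ f := by
  have hloc (x : Sub) : ∃ l : ℕ, ∀ y : Sub, (y : ℤ → A) ∈ cylinder Sub x l → f y = f x := by
    obtain ⟨U, hU, hUf⟩ := (mem_nhds_subtype _ _ _).1
      (hf.continuousAt.preimage_mem_nhds ((isOpen_discrete {f x}).mem_nhds rfl))
    obtain ⟨l, hl⟩ := exists_cylinder_subset_of_mem_nhds hU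
    exact ⟨l, fun y hy => hUf (hl ⟨trivial, hy.2⟩)⟩
  choose l hl using hloc
  obtain ⟨t, -, ht⟩ := isCompact_univ.elim_nhds_subcover
    (fun x => {y : Sub | (y : ℤ → A) ∈ cylinder Sub x (l x)})
    fun x _ => (isOpen_setOf_mem_cylinder Sub x (l x)).mem_nhds ⟨x.2, fun _ _ => rfl⟩
  refine ⟨t.sup l, fun w y z hy hz => ?_⟩
  obtain ⟨x, hxt, hyx⟩ := Set.mem_iUnion₂.1 (ht (Set.mem_univ y))
  have hzy : (z : ℤ → A) ∈ cylinder Sub y (t.sup l) := by rwa [cylinder_eq_of_mem hy]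
  have hzx : (z : ℤ → A) ∈ cylinder Sub x (l x) := by
    rw [← cylinder_eq_of_mem hyx]
    exact cylinder_antitone Sub y (t.le_sup hxt) hzy
  exact (hl x y hyx).trans (hl x z hzx).symm

theorem dense_setOf_isAperiodic [Finite A] {Sub : Set (ℤ → A)} [CompactSpace Sub]
    (hiso : ∀ x ∈ Sub, (∃ n : ℤ, n ≠ 0 ∧ (shiftE ^ n) x = x) → x ∈ closure (Sub \ {x})) :
    Dense {z : Sub | IsAperiodic (z : ℤ → A)} := by
  have hdense := dense_iInter_compl_of_finite
    (F := fun m : {m : ℤ // m ≠ 0} => {z : Sub | (shiftE ^ (m : ℤ)) (z : ℤ → A) = z})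
    (fun m => (finite_setOf_shiftE_zpow_eq m.2).preimage Subtype.val_injective.injOn)
    fun m z hz => by
      rw [closure_subtype, Set.image_val_compl, Set.image_singleton]
      exact hiso z z.2 ⟨m, m.2, hz⟩
  convert hdense using 1
  ext z
  simp [IsAperiodic]

end Shift

theorem cocycle_constant_on_cylinders_general {A : Type*} [Fintype A]
    [TopologicalSpace A] [DiscreteTopology A]
    (Sub : Set (ℤ → A)) (hclosed : IsClosed Sub)
    (hiso : ∀ x ∈ Sub, (∃ n : ℤ, n ≠ 0 ∧ (shiftE ^ n) x = x) → x ∈ closure (Sub \ {x}))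
    (S : Finset (Equiv.Perm ↥Sub))
    (k : Equiv.Perm ↥Sub → ↥Sub → ℤ)
    (hk : ∀ g ∈ Subgroup.closure (S : Set (Equiv.Perm ↥Sub)), ∀ x : ↥Sub,
      ((g x : ↥Sub) : ℤ → A) = (shiftE ^ k g x) (x : ℤ → A))
    (hkcont : ∀ g ∈ Subgroup.closure (S : Set (Equiv.Perm ↥Sub)), Continuous (k g)) :
    ∃ l₀ : ℕ, ∀ n : ℕ, 0 < n → ∀ l : ℕ, l₀ < l →
      ∀ hs : List (Equiv.Perm ↥Sub), (∀ s ∈ hs, s ∈ S) → hs.length = n →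
      ∀ w : ℤ → A, ∀ x : ↥Sub, (x : ℤ → A) ∈ cylinder Sub w l →
      (∀ m : ℤ, m ≠ 0 → (shiftE ^ m) (x : ℤ → A) ≠ (x : ℤ → A)) →
      (∀ j : ℕ, j ≤ n → |k ((hs.take j).reverse.prod) x| ≤ (l : ℤ) - (l₀ : ℤ)) →
      ∀ j : ℕ, j ≤ n → ∀ y : ↥Sub, (y : ℤ → A) ∈ cylinder Sub w l →
        k ((hs.take j).reverse.prod) y = k ((hs.take j).reverse.prod) x := by
  have : CompactSpace Sub := isCompact_iff_compactSpace.mp hclosed.isCompact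
  obtain ⟨l₀, hl₀⟩ := exists_depth_constant_on_cylinders (f := fun y (s : S) => k s y)
    (continuous_pi fun s => hkcont s (Subgroup.subset_closure s.2))
  refine ⟨l₀, fun n _ l _ hs hsS hlen w x hx hxa hmax j hj y hy => ?_⟩
  subst hlen
  set U : Set Sub := {z | (z : ℤ → A) ∈ cylinder Sub w l}
  set D : Set Sub := {z | IsAperiodic (z : ℤ → A)}
  have heq : Set.EqOn (k (hs.take j).reverse.prod) (fun _ => k (hs.take j).reverse.prod x)
      (U ∩ D) := fun z ⟨hz, hza⟩ =>
    IsOrbitCocycle.prod_reverse_take_eq_of_mem_cylinder hk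
      (fun s hs w y z hy hz => congrFun (hl₀ w y z hy hz) ⟨s, hs⟩) hsS hx hz hxa hza hmax j hj
  exact heq.of_subset_closure
    (hkcont _ (List.prod_reverse_take_mem_closure hsS j)).continuousOn continuousOn_const
    Set.inter_subset_left
    ((dense_setOf_isAperiodic hiso).open_subset_closure_inter (isOpen_setOf_mem_cylinder _ _ _))
    hy

/-- there is l₀ such that for all n > 0, l > l₀, all h₁,…,hₙ ∈ S with partial
products g_j = h_j ⋯ h₁, every cylinder C_w of depth l and every non-periodic x ∈ C_w with
max_{j ≤ n} |k_{g_j}(x)| ≤ l - l₀, each orbit cocycle k_{g_j} is constant on C_w. -/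
theorem cocycle_constant_on_cylinders {A : Type*} [Fintype A]
    [TopologicalSpace A] [DiscreteTopology A]
    (Sub : Set (ℤ → A)) (hclosed : IsClosed Sub) (hinv : shiftE '' Sub = Sub)
    (hiso : ∀ x ∈ Sub, (∃ n : ℤ, n ≠ 0 ∧ (shiftE ^ n) x = x) → x ∈ closure (Sub \ {x}))
    (S : Finset (Equiv.Perm ↥Sub)) (hSsymm : ∀ s ∈ S, s⁻¹ ∈ S)
    (k : Equiv.Perm ↥Sub → ↥Sub → ℤ)
    (hk : ∀ g ∈ Subgroup.closure (S : Set (Equiv.Perm ↥Sub)), ∀ x : ↥Sub,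
      ((g x : ↥Sub) : ℤ → A) = (shiftE ^ k g x) (x : ℤ → A))
    (hkcont : ∀ g ∈ Subgroup.closure (S : Set (Equiv.Perm ↥Sub)), Continuous (k g)) :
    ∃ l₀ : ℕ, ∀ n : ℕ, 0 < n → ∀ l : ℕ, l₀ < l →
      ∀ hs : List (Equiv.Perm ↥Sub), (∀ s ∈ hs, s ∈ S) → hs.length = n →
      ∀ w : ℤ → A, ∀ x : ↥Sub, (x : ℤ → A) ∈ cylinder Sub w l →
      (∀ m : ℤ, m ≠ 0 → (shiftE ^ m) (x : ℤ → A) ≠ (x : ℤ → A)) →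
      (∀ j : ℕ, j ≤ n → |k ((hs.take j).reverse.prod) x| ≤ (l : ℤ) - (l₀ : ℤ)) →
      ∀ j : ℕ, j ≤ n → ∀ y : ↥Sub, (y : ℤ → A) ∈ cylinder Sub w l →
        k ((hs.take j).reverse.prod) y = k ((hs.take j).reverse.prod) x :=
  cocycle_constant_on_cylinders_general Sub hclosed hiso S k hk hkcont
end

section
/- Let (Σ, τ) be a subshift, S ⊂ [[τ]] a finite symmetric set generating G, and x ∈ Σ a non-periodic point. Then the map ι_x : G·x → ℤ sending g·x to k_g(x) is well defined and injective, and it is K-Lipschitz from the Schreier graph metric on the orbit G·x (edges {y, sy} for s ∈ S) to ℤ, where K = max_{s∈S} max_{y∈Σ} |k_s(y)|. -/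
open Filter

/-- for a non-periodic point x of a subshift, the map ι_x : G·x → ℤ,
g·x ↦ k_g(x), is well defined and injective, and is K-Lipschitz from the Schreier graph of
(G, S) acting on the orbit of x to ℤ, where K = max_{s ∈ S} max_y |k_s(y)|. -/
theorem schreier_graph_lipschitz_embedding {A : Type*} [Fintype A]
    [TopologicalSpace A] [DiscreteTopology A]
    (Sub : Set (ℤ → A)) (hclosed : IsClosed Sub) (hinv : shiftE '' Sub = Sub)
    (S : Finset (Equiv.Perm ↥Sub)) (hSsymm : ∀ s ∈ S, s⁻¹ ∈ S)
    (k : Equiv.Perm ↥Sub → ↥Sub → ℤ)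
    (hk : ∀ g ∈ Subgroup.closure (S : Set (Equiv.Perm ↥Sub)), ∀ y : ↥Sub,
      ((g y : ↥Sub) : ℤ → A) = (shiftE ^ k g y) (y : ℤ → A))
    (K : ℤ) (hK : ∀ s ∈ S, ∀ y : ↥Sub, |k s y| ≤ K)
    (x : ↥Sub) (hx : ∀ n : ℤ, n ≠ 0 → (shiftE ^ n) (x : ℤ → A) ≠ (x : ℤ → A)) :
    (∀ g ∈ Subgroup.closure (S : Set (Equiv.Perm ↥Sub)),
      ∀ h ∈ Subgroup.closure (S : Set (Equiv.Perm ↥Sub)),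
        (g x = h x ↔ k g x = k h x)) ∧
    (∀ g ∈ Subgroup.closure (S : Set (Equiv.Perm ↥Sub)), ∀ s ∈ S,
      |k (s * g) x - k g x| ≤ K) := by
  have key : ∀ a b : ℤ, (shiftE ^ a) (x : ℤ → A) = (shiftE ^ b) (x : ℤ → A) → a = b := by
    intro a b hab
    by_contra hne
    apply hx (a - b) (sub_ne_zero.mpr hne)
    have := congrArg (shiftE ^ (-b)) hab
    rwa [← Equiv.Perm.mul_apply, ← Equiv.Perm.mul_apply, ← zpow_add, ← zpow_add,
      neg_add_cancel, zpow_zero, Equiv.Perm.one_apply, add_comm, ← sub_eq_add_neg] at this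
  constructor
  · intro g hg h hh
    constructor
    · intro hgh
      apply key
      rw [← hk g hg x, ← hk h hh x, hgh]
    · intro hkk
      ext1
      rw [hk g hg x, hk h hh x, hkk]
  · intro g hg s hs
    have hsg : s * g ∈ Subgroup.closure (S : Set (Equiv.Perm ↥Sub)) :=
      mul_mem (Subgroup.subset_closure hs) hg
    have hss : s ∈ Subgroup.closure (S : Set (Equiv.Perm ↥Sub)) := Subgroup.subset_closure hs
    have h1 : ((s * g) x : ℤ → A) = (shiftE ^ (k s (g x) + k g x)) (x : ℤ → A) := by
      rw [zpow_add]
      show ((s (g x) : ↥Sub) : ℤ → A) = (shiftE ^ k s (g x)) ((shiftE ^ k g x) (x : ℤ → A))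
      rw [← hk g hg x, hk s hss (g x)]
    have h2 : k (s * g) x = k s (g x) + k g x := by
      apply key
      rw [← hk (s * g) hsg x, h1]
    rw [h2, add_sub_cancel_right]
    exact hK s hs (g x)
end
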